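/- arXiv:math/0406475 — 4 statements merged into one kernel-verified Lean document; each statement's English description precedes it below -/
import Mathlib

section
/- Let F, G : SVect^n → SVect^m be ℂ-linear functors with rank matrices R(F) and R(G), where R(F)_{ij} = dim F_i(ℂ(j,n)). Then F and G are naturally isomorphic if and only if R(F) = R(G). -/
open CategoryTheory Matrix
open scoped BigOperators

/-- The skeletal category `SVect^n`: objects are `n`-tuples of natural numbers
(representing `(ℂ^{a₁},…,ℂ^{a_n})`), morphisms are tuples of complex matrices. -/
def SVectn (n : ℕ) : Type := Fin n → ℕ

namespace SVectn

noncomputable instance (n : ℕ) : Category (SVectn n) where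
  Hom a b := ∀ j, Matrix (Fin (b j)) (Fin (a j)) ℂ
  id _ := fun _ => 1
  comp f g := fun j => g j * f j
  id_comp f := by funext j; exact Matrix.mul_one _
  comp_id f := by funext j; exact Matrix.one_mul _
  assoc f g h := by funext j; exact (Matrix.mul_assoc _ _ _).symm

noncomputable instance (n : ℕ) : Preadditive (SVectn n) where
  homGroup a b := inferInstanceAs (AddCommGroup (∀ j, Matrix (Fin (b j)) (Fin (a j)) ℂ))
  add_comp a b c f f' g := by funext j; exact Matrix.mul_add _ _ _
  comp_add a b c f g g' := by funext j; exact Matrix.add_mul _ _ _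

noncomputable instance (n : ℕ) : CategoryTheory.Linear ℂ (SVectn n) where
  homModule a b := inferInstanceAs (Module ℂ (∀ j, Matrix (Fin (b j)) (Fin (a j)) ℂ))
  smul_comp a b c s f g := by
    funext j
    show g j * (s • f j) = s • (g j * f j)
    exact Matrix.mul_smul _ _ _
  comp_smul a b c f s g := by
    funext j
    show (s • g j) * f j = s • (g j * f j)
    exact Matrix.smul_mul _ _ _

end SVectn

/-- The object `ℂ(j,n) = (0,…,ℂ,…,0)` of `SVect^n`, with `ℂ` in position `j`. -/
def unitObj (n : ℕ) (j : Fin n) : SVectn n := fun j' => if j' = j then 1 else 0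

instance SVectn.finFintype {n : ℕ} (a : SVectn n) (j : Fin n) : Fintype (Fin (a j)) :=
  Fin.fintype _

section Aux
variable {n : ℕ}

def incl (a : SVectn n) (j : Fin n) (k : Fin (a j)) : unitObj n j ⟶ a :=
  fun i => Matrix.of fun r _ => if i = j ∧ (r : ℕ) = (k : ℕ) then (1 : ℂ) else 0

def projn (a : SVectn n) (j : Fin n) (k : Fin (a j)) : a ⟶ unitObj n j :=
  fun i => Matrix.of fun _ c => if i = j ∧ (c : ℕ) = (k : ℕ) then (1 : ℂ) else 0

/-- evaluation at an entry, as an additive hom -/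
def evHom {a b : SVectn n} (i : Fin n) (r : Fin (b i)) (c : Fin (a i)) : (a ⟶ b) →+ ℂ where
  toFun f := f i r c
  map_zero' := rfl
  map_add' _ _ := rfl

lemma sum_hom_apply {a b : SVectn n} {ι : Type*} (s : Finset ι) (f : ι → (a ⟶ b))
    (i : Fin n) (r : Fin (b i)) (c : Fin (a i)) :
    (∑ x ∈ s, f x) i r c = ∑ x ∈ s, f x i r c :=
  map_sum (evHom i r c) f s

lemma hom_between_units_eq {j j' : Fin n} (hjj : j ≠ j')
    (u v : unitObj n j ⟶ unitObj n j') : u = v := by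
  funext i r c
  by_cases hij : i = j
  · exfalso
    subst hij
    have := r.2
    simp [unitObj, hjj] at this
  · exfalso
    have := c.2
    simp [unitObj, hij] at this

lemma smul_id_apply (s : ℂ) (b : SVectn n) (i : Fin n) (r c : Fin (b i)) :
    (s • 𝟙 b) i r c = if r = c then s else 0 := by
  show (s • (1 : Matrix (Fin (b i)) (Fin (b i)) ℂ)) r c = _
  rw [Matrix.smul_apply, Matrix.one_apply]
  split <;> simp

lemma id_apply (b : SVectn n) (i : Fin n) (r c : Fin (b i)) :
    (𝟙 b) i r c = if r = c then (1:ℂ) else 0 := Matrix.one_apply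

lemma hom_unit_exists_smul {j : Fin n} (u : unitObj n j ⟶ unitObj n j) :
    ∃ s : ℂ, u = s • 𝟙 (unitObj n j) := by
  refine ⟨u j ⟨0, by simp [unitObj]⟩ ⟨0, by simp [unitObj]⟩, ?_⟩
  funext i r c
  by_cases hij : i = j
  · subst hij
    have hr : (r : ℕ) = 0 := by have := r.2; simp [unitObj] at this; omega
    have hc : (c : ℕ) = 0 := by have := c.2; simp [unitObj] at this; omega
    have hrc : r = c := Fin.ext (hr.trans hc.symm)
    have h0 : r = (⟨0, by simp [unitObj]⟩ : Fin (unitObj n i i)) := Fin.ext hr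
    rw [smul_id_apply, if_pos hrc]
    subst hrc; rw [h0]
  · exfalso
    have := r.2
    simp [unitObj, hij] at this

lemma sum_proj_incl (a : SVectn n) :
    ∑ p : Σ j : Fin n, Fin (a j), projn a p.1 p.2 ≫ incl a p.1 p.2 = 𝟙 a := by
  funext i r c
  rw [sum_hom_apply]
  have hrw : ∀ p : Σ j : Fin n, Fin (a j),
      (projn a p.1 p.2 ≫ incl a p.1 p.2) i r c
      = ∑ s : Fin (unitObj n p.1 i),
          (if i = p.1 ∧ (r : ℕ) = (p.2 : ℕ) then (1:ℂ) else 0)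
          * (if i = p.1 ∧ (c : ℕ) = (p.2 : ℕ) then (1:ℂ) else 0) := by
    intro p
    show (incl a p.1 p.2 i * projn a p.1 p.2 i) r c = _
    rw [Matrix.mul_apply]
    rfl
  simp only [hrw]
  rw [← Finset.univ_sigma_univ, Finset.sum_sigma]
  rw [Finset.sum_eq_single i]
  · have h1 : unitObj n i i = 1 := by simp [unitObj]
    rw [id_apply]
    simp only [eq_self_iff_true, true_and, Finset.sum_const, Finset.card_univ,
      Fintype.card_fin, h1, one_smul]
    by_cases hrc : r = c
    · subst hrc
      rw [if_pos rfl, Finset.sum_eq_single r]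
      · simp
      · intro k _ hk
        have : (r : ℕ) ≠ (k : ℕ) := fun h => hk (Fin.ext h.symm)
        simp [this]
      · intro h; exact absurd (Finset.mem_univ r) h
    · rw [if_neg hrc]
      apply Finset.sum_eq_zero
      intro k _
      rcases eq_or_ne (r : ℕ) (k : ℕ) with h1'|h1'
      · rcases eq_or_ne (c : ℕ) (k : ℕ) with h2|h2
        · exact absurd (Fin.ext (h1'.trans h2.symm)) hrc
        · simp [h2]
      · simp [h1']
  · intro j _ hji
    simp [Ne.symm hji]
  · intro h; exact absurd (Finset.mem_univ i) h
end Aux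

section Main
variable {n m : ℕ}

lemma key_lemma (F G : SVectn n ⥤ SVectn m) [F.Additive] [F.Linear ℂ] [G.Additive] [G.Linear ℂ]
    (h : ∀ j : Fin n, F.obj (unitObj n j) = G.obj (unitObj n j))
    (j j' : Fin n) (u : unitObj n j ⟶ unitObj n j') :
    F.map u ≫ eqToHom (h j') = eqToHom (h j) ≫ G.map u := by
  by_cases hjj : j = j'
  · subst hjj
    obtain ⟨s, rfl⟩ := hom_unit_exists_smul u
    rw [F.map_smul, G.map_smul, F.map_id, G.map_id]
    simp [CategoryTheory.Linear.smul_comp, CategoryTheory.Linear.comp_smul]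
  · have : u = 0 := hom_between_units_eq hjj u 0
    rw [this, F.map_zero, G.map_zero]
    simp

variable (F G : SVectn n ⥤ SVectn m) [F.Additive] [F.Linear ℂ] [G.Additive] [G.Linear ℂ]
variable (h : ∀ j : Fin n, F.obj (unitObj n j) = G.obj (unitObj n j))

/-- the candidate natural transformation -/
noncomputable def theApp (a : SVectn n) : F.obj a ⟶ G.obj a :=
  ∑ p : Σ j : Fin n, Fin (a j),
    F.map (projn a p.1 p.2) ≫ eqToHom (h p.1) ≫ G.map (incl a p.1 p.2)

lemma theApp_natural {a b : SVectn n} (f : a ⟶ b) :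
    F.map f ≫ theApp F G h b = theApp F G h a ≫ G.map f := by
  have hD : F.map f ≫ theApp F G h b
      = ∑ p : Σ j : Fin n, Fin (a j), ∑ q : Σ j : Fin n, Fin (b j),
          F.map (projn a p.1 p.2) ≫ eqToHom (h p.1) ≫
            G.map (incl a p.1 p.2 ≫ f ≫ projn b q.1 q.2) ≫ G.map (incl b q.1 q.2) := by
    rw [theApp, Preadditive.comp_sum]
    rw [Finset.sum_comm]
    refine Finset.sum_congr rfl fun q _ => ?_
    rw [← Category.assoc, ← F.map_comp]
    have hexp : f ≫ projn b q.1 q.2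
        = ∑ p : Σ j : Fin n, Fin (a j),
            projn a p.1 p.2 ≫ (incl a p.1 p.2 ≫ f ≫ projn b q.1 q.2) := by
      conv_lhs => rw [← Category.id_comp (f ≫ projn b q.1 q.2), ← sum_proj_incl a]
      rw [Preadditive.sum_comp]
      simp only [Category.assoc]
    conv_lhs => rw [hexp, F.map_sum, Preadditive.sum_comp]
    refine Finset.sum_congr rfl fun p _ => ?_
    rw [F.map_comp, Category.assoc]
    congr 1
    rw [← Category.assoc, key_lemma F G h, Category.assoc]
  have hD' : theApp F G h a ≫ G.map f
      = ∑ p : Σ j : Fin n, Fin (a j), ∑ q : Σ j : Fin n, Fin (b j),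
          F.map (projn a p.1 p.2) ≫ eqToHom (h p.1) ≫
            G.map (incl a p.1 p.2 ≫ f ≫ projn b q.1 q.2) ≫ G.map (incl b q.1 q.2) := by
    rw [theApp, Preadditive.sum_comp]
    refine Finset.sum_congr rfl fun p _ => ?_
    have hexp : incl a p.1 p.2 ≫ f
        = ∑ q : Σ j : Fin n, Fin (b j),
            (incl a p.1 p.2 ≫ f ≫ projn b q.1 q.2) ≫ incl b q.1 q.2 := by
      conv_lhs => rw [← Category.comp_id (incl a p.1 p.2 ≫ f), ← sum_proj_incl b]
      rw [Preadditive.comp_sum]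
      simp only [Category.assoc]
    have : G.map (incl a p.1 p.2) ≫ G.map f
        = ∑ q : Σ j : Fin n, Fin (b j),
            G.map (incl a p.1 p.2 ≫ f ≫ projn b q.1 q.2) ≫ G.map (incl b q.1 q.2) := by
      rw [← G.map_comp, hexp, G.map_sum]
      exact Finset.sum_congr rfl fun q _ => G.map_comp _ _
    rw [Category.assoc, Category.assoc, this, Preadditive.comp_sum, Preadditive.comp_sum]
  rw [hD, hD']

lemma theApp_comp (h' : ∀ j : Fin n, G.obj (unitObj n j) = F.obj (unitObj n j))
    (a : SVectn n) : theApp F G h a ≫ theApp G F h' a = 𝟙 (F.obj a) := by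
  have hexp : theApp F G h a ≫ theApp G F h' a
      = ∑ p : Σ j : Fin n, Fin (a j), ∑ q : Σ j : Fin n, Fin (a j),
          F.map (projn a p.1 p.2 ≫ (incl a p.1 p.2 ≫ projn a q.1 q.2) ≫ incl a q.1 q.2) := by
    rw [theApp, theApp, Preadditive.sum_comp]
    refine Finset.sum_congr rfl fun p _ => ?_
    rw [Preadditive.comp_sum]
    refine Finset.sum_congr rfl fun q _ => ?_
    conv_rhs => rw [F.map_comp, F.map_comp]
    simp only [Category.assoc]
    slice_lhs 3 4 => rw [← G.map_comp]
    slice_lhs 3 4 => rw [key_lemma G F h']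
    slice_lhs 2 3 => rw [eqToHom_trans]
    simp
  have h2 : ∑ p : Σ j : Fin n, Fin (a j), ∑ q : Σ j : Fin n, Fin (a j),
      (projn a p.1 p.2 ≫ (incl a p.1 p.2 ≫ projn a q.1 q.2) ≫ incl a q.1 q.2 : a ⟶ a)
      = 𝟙 a := by
    have hstep : ∀ p : Σ j : Fin n, Fin (a j),
        ∑ q : Σ j : Fin n, Fin (a j),
          (projn a p.1 p.2 ≫ (incl a p.1 p.2 ≫ projn a q.1 q.2) ≫ incl a q.1 q.2 : a ⟶ a)
        = (projn a p.1 p.2 ≫ incl a p.1 p.2) ≫ 𝟙 a := by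
      intro p
      conv_rhs => rw [← sum_proj_incl a]
      rw [Preadditive.comp_sum]
      simp only [Category.assoc]
    simp only [hstep, Category.comp_id]
    exact sum_proj_incl a
  rw [hexp]
  calc ∑ p : Σ j : Fin n, Fin (a j), ∑ q : Σ j : Fin n, Fin (a j),
          F.map (projn a p.1 p.2 ≫ (incl a p.1 p.2 ≫ projn a q.1 q.2) ≫ incl a q.1 q.2)
      = ∑ p : Σ j : Fin n, Fin (a j),
          F.map (∑ q : Σ j : Fin n, Fin (a j),
            projn a p.1 p.2 ≫ (incl a p.1 p.2 ≫ projn a q.1 q.2) ≫ incl a q.1 q.2) :=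
        Finset.sum_congr rfl fun p _ => (F.map_sum _ _).symm
    _ = F.map (∑ p : Σ j : Fin n, Fin (a j), ∑ q : Σ j : Fin n, Fin (a j),
            projn a p.1 p.2 ≫ (incl a p.1 p.2 ≫ projn a q.1 q.2) ≫ incl a q.1 q.2) :=
        (F.map_sum _ _).symm
    _ = F.map (𝟙 a) := by rw [h2]
    _ = 𝟙 (F.obj a) := F.map_id a

end Main

/-- two ℂ-linear functors `F, G : SVect^n ⥤ SVect^m` are naturally
isomorphic if and only if their rank matrices `R(F)_{ij} = dim F_i(ℂ(j,n))` coincide. -/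
theorem stmt8 {n m : ℕ} (F G : SVectn n ⥤ SVectn m)
    [F.Additive] [F.Linear ℂ] [G.Additive] [G.Linear ℂ] :
    Nonempty (F ≅ G) ↔ ∀ (i : Fin m) (j : Fin n),
      F.obj (unitObj n j) i = G.obj (unitObj n j) i := by
  constructor
  · rintro ⟨Φ⟩ i j
    have hBA : Φ.inv.app (unitObj n j) i * Φ.hom.app (unitObj n j) i = 1 :=
      congrFun (Φ.hom_inv_id_app (unitObj n j)) i
    have hAB : Φ.hom.app (unitObj n j) i * Φ.inv.app (unitObj n j) i = 1 :=
      congrFun (Φ.inv_hom_id_app (unitObj n j)) i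
    have t1 : Matrix.trace (1 : Matrix (Fin (F.obj (unitObj n j) i))
        (Fin (F.obj (unitObj n j) i)) ℂ) = (F.obj (unitObj n j) i : ℂ) := by
      rw [Matrix.trace_one]; simp
    have t2 : Matrix.trace (1 : Matrix (Fin (G.obj (unitObj n j) i))
        (Fin (G.obj (unitObj n j) i)) ℂ) = (G.obj (unitObj n j) i : ℂ) := by
      rw [Matrix.trace_one]; simp
    have hcast : ((F.obj (unitObj n j) i : ℕ) : ℂ) = ((G.obj (unitObj n j) i : ℕ) : ℂ) := by
      rw [← t1, ← t2, ← hBA, ← hAB, Matrix.trace_mul_comm]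
    exact_mod_cast hcast
  · intro hR
    have h : ∀ j : Fin n, F.obj (unitObj n j) = G.obj (unitObj n j) :=
      fun j => funext fun i => hR i j
    have h' : ∀ j : Fin n, G.obj (unitObj n j) = F.obj (unitObj n j) := fun j => (h j).symm
    exact ⟨{
      hom := { app := theApp F G h, naturality := fun a b f => theApp_natural F G h f }
      inv := { app := theApp G F h', naturality := fun a b f => theApp_natural G F h' f }
      hom_inv_id := by
        ext a
        simp only [NatTrans.comp_app, NatTrans.id_app]
        exact theApp_comp F G h h' a
      inv_hom_id := by
        ext a
        simp only [NatTrans.comp_app, NatTrans.id_app]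
        exact theApp_comp G F h' h a }⟩
end

section
/- Let F, F' : SVect^n → SVect^m be ℂ-linear functors with rank matrices R and R'. The map sending a natural transformation τ : F ⟹ F' to its matrix T(τ), where T(τ)_{ij} is the matrix of the i-th component of τ_{ℂ(j,n)}, is a bijection from Nat(F,F') onto the set of m×n matrices whose (i,j)-entry is an arbitrary R'_{ij} × R_{ij} complex matrix. -/
/-!
Every object `a` of `SVect^n` is the biproduct of `a j` copies of each `ℂ(j,n)`, through the
coordinate inclusions `incl a j k` and projections `proj a j k`. For additive functors a natural
transformation is therefore determined by its components at the `ℂ(j,n)`; conversely, for any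
choice of components `φ j` the sum `∑ F(proj) ≫ φ j ≫ F'(incl)` is natural, because ℂ-linearity
of `F` and `F'` lets the matrix entries of a morphism pass through both functors. Swapping the
indices `i` and `j` then identifies the components with the matrices `T(τ)`.
-/

open CategoryTheory Matrix
open scoped BigOperators

namespace SVectn

variable {n : ℕ}

@[simp] lemma comp_apply {a b c : SVectn n} (f : a ⟶ b) (g : b ⟶ c) (j : Fin n) :
    (f ≫ g) j = g j * f j := rfl

@[simp] lemma id_apply (a : SVectn n) (j : Fin n) : (𝟙 a : a ⟶ a) j = 1 := rfl

@[simp] lemma sum_apply {a b : SVectn n} {γ : Type*} (s : Finset γ) (f : γ → (a ⟶ b))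
    (j : Fin n) : (∑ i ∈ s, f i) j = ∑ i ∈ s, f i j :=
  Finset.sum_apply j s f

@[simp] lemma smul_apply {a b : SVectn n} (c : ℂ) (f : a ⟶ b) (j : Fin n) :
    (c • f) j = c • f j := rfl

lemma unitObj_self (j : Fin n) : unitObj n j j = 1 := if_pos rfl

lemma unitObj_of_ne {j j' : Fin n} (h : j' ≠ j) : unitObj n j j' = 0 := if_neg h

lemma fin_unitObj_self_eq {j : Fin n} (r c : Fin (unitObj n j j)) : r = c := by
  revert r c
  rw [unitObj_self]
  exact Subsingleton.elim

lemma hom_unitObj_ext {j : Fin n} {f g : unitObj n j ⟶ unitObj n j}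
    (h : ∀ r c : Fin (unitObj n j j), f j r c = g j r c) : f = g := by
  funext j' r c
  by_cases hj : j' = j
  · subst hj
    exact h r c
  · exact Fin.elim0 (unitObj_of_ne hj ▸ r)

/-- Row indices are compared in `ℕ` because `Fin (a j')` and `Fin (a j)` are different types
when `j' ≠ j`. -/
noncomputable def incl (a : SVectn n) (j : Fin n) (k : Fin (a j)) : unitObj n j ⟶ a :=
  fun j' => Matrix.of fun r _ => if j' = j ∧ (r : ℕ) = k then 1 else 0

noncomputable def proj (a : SVectn n) (j : Fin n) (k : Fin (a j)) : a ⟶ unitObj n j :=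
  fun j' => Matrix.of fun _ c => if j' = j ∧ (c : ℕ) = k then 1 else 0

lemma sum_proj_comp_incl (a : SVectn n) :
    ∑ j : Fin n, ∑ k : Fin (a j), proj a j k ≫ incl a j k = 𝟙 a := by
  funext j' r c
  simp only [sum_apply, comp_apply, id_apply, Matrix.sum_apply, Matrix.mul_apply, incl, proj,
    Matrix.of_apply]
  rw [Finset.sum_eq_single j' (fun j _ hj => Finset.sum_eq_zero fun k _ =>
    Finset.sum_eq_zero fun s _ => by rw [if_neg (fun h => hj h.1.symm), zero_mul]) (by simp)]
  simp [unitObj_self, Matrix.one_apply, Fin.val_inj]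

lemma incl_comp {a b : SVectn n} (f : a ⟶ b) (j : Fin n) (k : Fin (a j)) :
    incl a j k ≫ f = ∑ l : Fin (b j), f j l k • incl b j l := by
  funext j' r c
  simp only [sum_apply, comp_apply, smul_apply, Matrix.sum_apply, Matrix.mul_apply, incl,
    Matrix.of_apply, Matrix.smul_apply, smul_eq_mul]
  by_cases h : j' = j
  · subst h
    simp [Fin.val_inj, eq_comm]
  · simp [h]

lemma comp_proj {a b : SVectn n} (f : a ⟶ b) (j : Fin n) (l : Fin (b j)) :
    f ≫ proj b j l = ∑ k : Fin (a j), f j l k • proj a j k := by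
  funext j' r c
  simp only [sum_apply, comp_apply, smul_apply, Matrix.sum_apply, Matrix.mul_apply, proj,
    Matrix.of_apply, Matrix.smul_apply, smul_eq_mul]
  by_cases h : j' = j
  · subst h
    simp [Fin.val_inj, eq_comm]
  · simp [h]

lemma incl_unitObj (j : Fin n) (k : Fin (unitObj n j j)) :
    incl (unitObj n j) j k = 𝟙 (unitObj n j) :=
  hom_unitObj_ext fun r c => by
    simp [incl, Fin.val_inj, fin_unitObj_self_eq r k, fin_unitObj_self_eq k c]

lemma proj_unitObj (j : Fin n) (k : Fin (unitObj n j j)) :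
    proj (unitObj n j) j k = 𝟙 (unitObj n j) :=
  hom_unitObj_ext fun r c => by
    simp [proj, Fin.val_inj, fin_unitObj_self_eq r k, fin_unitObj_self_eq k c]

lemma sum_sum_unitObj {M : Type*} [AddCommMonoid M] (j₀ : Fin n)
    (g : ∀ j, Fin (unitObj n j₀ j) → M) :
    ∑ j, ∑ k, g j k = g j₀ ⟨0, by simp [unitObj_self]⟩ := by
  rw [Finset.sum_eq_single j₀
    (fun j _ hj => Finset.sum_eq_zero fun k _ => Fin.elim0 (unitObj_of_ne hj ▸ k)) (by simp)]
  exact Finset.sum_eq_single_of_mem _ (Finset.mem_univ _)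
    fun k _ hk => (hk (fin_unitObj_self_eq _ _)).elim

section

variable {D : Type*} [Category D] [Preadditive D]

lemma natTrans_app_eq_sum {F F' : SVectn n ⥤ D} [F.Additive] (τ : F ⟶ F') (a : SVectn n) :
    τ.app a = ∑ j, ∑ k, F.map (proj a j k) ≫ τ.app (unitObj n j) ≫ F'.map (incl a j k) := by
  conv_lhs => rw [← Category.id_comp (τ.app a), ← F.map_id, ← sum_proj_comp_incl a]
  simp only [F.map_sum, F.map_comp, Preadditive.sum_comp, Category.assoc, τ.naturality]

variable [Linear ℂ D]

lemma map_comp_map_proj (F : SVectn n ⥤ D) [F.Additive] [F.Linear ℂ] {a b : SVectn n}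
    (f : a ⟶ b) (j : Fin n) (l : Fin (b j)) {Z : D} (φ : F.obj (unitObj n j) ⟶ Z) :
    F.map f ≫ F.map (proj b j l) ≫ φ = ∑ k, f j l k • (F.map (proj a j k) ≫ φ) := by
  rw [← Category.assoc, ← F.map_comp, comp_proj, F.map_sum, Preadditive.sum_comp]
  simp only [F.map_smul, Linear.smul_comp]

lemma map_incl_comp_map (F : SVectn n ⥤ D) [F.Additive] [F.Linear ℂ] {a b : SVectn n}
    (f : a ⟶ b) (j : Fin n) (k : Fin (a j)) {Z : D} (ψ : Z ⟶ F.obj (unitObj n j)) :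
    ψ ≫ F.map (incl a j k) ≫ F.map f = ∑ l, f j l k • (ψ ≫ F.map (incl b j l)) := by
  rw [← F.map_comp, incl_comp, F.map_sum, Preadditive.comp_sum]
  simp only [F.map_smul, Linear.comp_smul]

variable {F F' : SVectn n ⥤ D} [F.Additive] [F'.Additive] [F.Linear ℂ] [F'.Linear ℂ]

@[simps]
noncomputable def natTransOfUnitObj (φ : ∀ j, F.obj (unitObj n j) ⟶ F'.obj (unitObj n j)) :
    F ⟶ F' where
  app a := ∑ j, ∑ k, F.map (proj a j k) ≫ φ j ≫ F'.map (incl a j k)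
  naturality a b f := by
    simp only [Preadditive.comp_sum, Preadditive.sum_comp, Category.assoc, map_comp_map_proj,
      map_incl_comp_map, Linear.comp_smul]
    exact Finset.sum_congr rfl fun j _ => Finset.sum_comm

lemma natTransOfUnitObj_app_unitObj (φ : ∀ j, F.obj (unitObj n j) ⟶ F'.obj (unitObj n j))
    (j : Fin n) : (natTransOfUnitObj φ).app (unitObj n j) = φ j := by
  simp [sum_sum_unitObj, proj_unitObj, incl_unitObj]

variable (F F') in
noncomputable def natTransEquivUnitObj :
    (F ⟶ F') ≃ ∀ j, F.obj (unitObj n j) ⟶ F'.obj (unitObj n j) where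
  toFun τ j := τ.app (unitObj n j)
  invFun := natTransOfUnitObj
  left_inv τ := by
    ext a
    rw [natTransOfUnitObj_app, natTrans_app_eq_sum]
  right_inv φ := funext (natTransOfUnitObj_app_unitObj φ)

end

end SVectn

open SVectn

/-- for ℂ-linear functors `F, F' : SVect^n ⥤ SVect^m` with rank matrices
`R, R'`, the map sending a natural transformation `τ : F ⟹ F'` to the matrix
`T(τ)_{ij}` = (`i`-th component of `τ_{ℂ(j,n)}`) is a bijection onto the set of `m×n`
matrices whose `(i,j)`-entry is an arbitrary `R'_{ij} × R_{ij}` complex matrix. -/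
theorem stmt14 {n m : ℕ} (F F' : SVectn n ⥤ SVectn m)
    [F.Additive] [F.Linear ℂ] [F'.Additive] [F'.Linear ℂ] :
    Function.Bijective
      (fun (τ : F ⟶ F') (i : Fin m) (j : Fin n) =>
        (τ.app (unitObj n j) i :
          Matrix (Fin (F'.obj (unitObj n j) i)) (Fin (F.obj (unitObj n j) i)) ℂ)) :=
  ((natTransEquivUnitObj F F').trans (Equiv.piComm fun j i =>
    Matrix (Fin (F'.obj (unitObj n j) i)) (Fin (F.obj (unitObj n j) i)) ℂ)).bijective
end

section
/- Define the horizontal composition of matrices of matrices by (T̃ ∘ T)_{kj} = s̃'_k(R'(e_j)) · (⊕_{i=1}^{m} T̃_{ki} ⊗ T_{ij}) · s̃_k(R(e_j))⁻¹, for T a 2-morphism (R,s) ⟹ (R',s') : n → m and T̃ a 2-morphism (R̃,s̃) ⟹ (R̃',s̃') : m → p in 2SVect_cc. Then when T̃ is the identity 2-morphism of the identity 1-morphism (Id_m, 1) (trivial gauge, all nonempty entries identity matrices), one has T̃ ∘ T = T; similarly when T is the identity 2-morphism of (Id_n, 1), one has T̃ ∘ T = T̃. -/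
open Matrix
open scoped Kronecker BigOperators

/-- Canonical (order-preserving) block-diagonal direct sum of a family of rectangular
complex matrices, indexed by `Fin`-types of the total sizes. -/
noncomputable def bdiag : {m : ℕ} → (f g : Fin m → ℕ) →
    (∀ i, Matrix (Fin (f i)) (Fin (g i)) ℂ) →
    Matrix (Fin (∑ i, f i)) (Fin (∑ i, g i)) ℂ
  | 0, _, _, _ => 0
  | (m + 1), f, g, M =>
    (Matrix.reindex (finCongr (Fin.sum_univ_succ f).symm)
        (finCongr (Fin.sum_univ_succ g).symm))
      ((Matrix.reindex finSumFinEquiv finSumFinEquiv)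
        (Matrix.fromBlocks (M 0) 0 0
          (bdiag (fun i => f i.succ) (fun i => g i.succ) (fun i => M i.succ))))


theorem bdiag_single : ∀ {m : ℕ} (f g : Fin m → ℕ)
    (M : ∀ i, Matrix (Fin (f i)) (Fin (g i)) ℂ) (j : Fin m)
    (_hf : ∀ i, i ≠ j → f i = 0) (_hg : ∀ i, i ≠ j → g i = 0)
    (hf' : ∑ i, f i = f j) (hg' : ∑ i, g i = g j)
    (a : Fin (∑ i, f i)) (b : Fin (∑ i, g i)),
    bdiag f g M a b = M j (Fin.cast hf' a) (Fin.cast hg' b) := by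
  intro m
  induction m with
  | zero => intro f g M j; exact j.elim0
  | succ m ih =>
    intro f g M j hf hg hf' hg' a b
    simp only [bdiag, Matrix.reindex_apply, Matrix.submatrix_apply, finCongr_symm,
      finCongr_apply]
    rcases Fin.eq_zero_or_eq_succ j with rfl | ⟨j', rfl⟩
    · have hft : ∀ i : Fin m, f i.succ = 0 := fun i => hf i.succ (Fin.succ_ne_zero i)
      have h1 : finSumFinEquiv.symm (Fin.cast (Fin.sum_univ_succ f) a) =
          Sum.inl (Fin.cast hf' a) := by
        apply finSumFinEquiv.injective
        simp [Fin.ext_iff]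
      have h2 : finSumFinEquiv.symm (Fin.cast (Fin.sum_univ_succ g) b) =
          Sum.inl (Fin.cast hg' b) := by
        apply finSumFinEquiv.injective
        simp [Fin.ext_iff]
      rw [h1, h2]
      simp [Matrix.fromBlocks]
    · have hf0 : f 0 = 0 := hf 0 (Ne.symm (Fin.succ_ne_zero j'))
      have hg0 : g 0 = 0 := hg 0 (Ne.symm (Fin.succ_ne_zero j'))
      have hft' : ∑ i : Fin m, f i.succ = f j'.succ := by
        rw [← hf', Fin.sum_univ_succ, hf0, zero_add]
      have hgt' : ∑ i : Fin m, g i.succ = g j'.succ := by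
        rw [← hg', Fin.sum_univ_succ, hg0, zero_add]
      have h1 : finSumFinEquiv.symm (Fin.cast (Fin.sum_univ_succ f) a) =
          Sum.inr (Fin.cast (by rw [hf', ← hft']) a) := by
        apply finSumFinEquiv.injective
        simp [Fin.ext_iff, hf0]
      have h2 : finSumFinEquiv.symm (Fin.cast (Fin.sum_univ_succ g) b) =
          Sum.inr (Fin.cast (by rw [hg', ← hgt']) b) := by
        apply finSumFinEquiv.injective
        simp [Fin.ext_iff, hg0]
      rw [h1, h2]
      simp only [Matrix.fromBlocks_apply₂₂]
      rw [ih _ _ _ j' (fun i hi => hf i.succ (by simpa using hi))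
        (fun i hi => hg i.succ (by simpa using hi)) hft' hgt']
      congr 1 <;> simp [Fin.ext_iff]

/-- Horizontal composition of 2-morphisms in `2SVect_cc`: for `T : (R,s) ⟹ (R',s') : n → m`
and `T̃ : (R̃,sG) ⟹ (R̃',sG') : m → p`,
`(T̃ ∘ T)_{kj} = sG'_k(R'(e_j)) · (⊕_i T̃_{ki} ⊗ T_{ij}) · sG_k(R(e_j))⁻¹`. -/
noncomputable def hcomp {n m p : ℕ}
    (R R' : Fin m → Fin n → ℕ) (Rt Rt' : Fin p → Fin m → ℕ)
    (sG : ∀ (k : Fin p) (a : Fin m → ℕ),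
      Matrix (Fin (∑ i, Rt k i * a i)) (Fin (∑ i, Rt k i * a i)) ℂ)
    (sG' : ∀ (k : Fin p) (a : Fin m → ℕ),
      Matrix (Fin (∑ i, Rt' k i * a i)) (Fin (∑ i, Rt' k i * a i)) ℂ)
    (Tt : ∀ k i, Matrix (Fin (Rt' k i)) (Fin (Rt k i)) ℂ)
    (T : ∀ i j, Matrix (Fin (R' i j)) (Fin (R i j)) ℂ)
    (k : Fin p) (j : Fin n) :
    Matrix (Fin (∑ i, Rt' k i * R' i j)) (Fin (∑ i, Rt k i * R i j)) ℂ :=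
  sG' k (fun i => R' i j) *
    bdiag (fun i => Rt' k i * R' i j) (fun i => Rt k i * R i j)
      (fun i => Matrix.reindex finProdFinEquiv finProdFinEquiv (Tt k i ⊗ₖ T i j)) *
    (sG k (fun i => R i j))⁻¹

/-- the identity 2-morphism of the identity 1-morphism `(Id, 1)` (with
trivial gauge and all nonempty entries identity matrices) is a two-sided unit for the
horizontal composition of 2-morphisms in `2SVect_cc` (up to the canonical
size-identifications `R'_{kj} = ∑_i δ_{ki} R'_{ij}` etc.). -/
theorem stmt16 {n m p : ℕ}
    (R R' : Fin m → Fin n → ℕ) (Rt Rt' : Fin p → Fin m → ℕ)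
    (sG : ∀ (k : Fin p) (a : Fin m → ℕ),
      Matrix (Fin (∑ i, Rt k i * a i)) (Fin (∑ i, Rt k i * a i)) ℂ)
    (sG' : ∀ (k : Fin p) (a : Fin m → ℕ),
      Matrix (Fin (∑ i, Rt' k i * a i)) (Fin (∑ i, Rt' k i * a i)) ℂ)
    (hsG : ∀ k a, IsUnit (sG k a)) (hsG' : ∀ k a, IsUnit (sG' k a))
    (hnormG : ∀ k i, sG k (Pi.single i 1) = 1)
    (hnormG' : ∀ k i, sG' k (Pi.single i 1) = 1)
    (T : ∀ i j, Matrix (Fin (R' i j)) (Fin (R i j)) ℂ)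
    (Tt : ∀ k i, Matrix (Fin (Rt' k i)) (Fin (Rt k i)) ℂ) :
    (∀ (k : Fin m) (j : Fin n),
      hcomp R R' (fun k' i => if k' = i then 1 else 0) (fun k' i => if k' = i then 1 else 0)
        (fun _ _ => 1) (fun _ _ => 1) (fun _ _ => 1) T k j =
      Matrix.reindex
        (finCongr (by simp [ite_mul] : R' k j = ∑ i, (if k = i then 1 else 0) * R' i j))
        (finCongr (by simp [ite_mul] : R k j = ∑ i, (if k = i then 1 else 0) * R i j))
        (T k j)) ∧
    (∀ (k : Fin p) (j : Fin m),
      hcomp (fun i j' => if i = j' then 1 else 0) (fun i j' => if i = j' then 1 else 0)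
        Rt Rt' sG sG' Tt (fun _ _ => 1) k j =
      Matrix.reindex
        (finCongr (by simp [mul_ite] : Rt' k j = ∑ i, Rt' k i * (if i = j then 1 else 0)))
        (finCongr (by simp [mul_ite] : Rt k j = ∑ i, Rt k i * (if i = j then 1 else 0)))
        (Tt k j)) := by
  constructor
  · intro k j
    simp only [hcomp]
    rw [inv_one, Matrix.one_mul, Matrix.mul_one]
    ext a b
    rw [bdiag_single _ _ _ k (fun i hi => by simp [Ne.symm hi]) (fun i hi => by simp [Ne.symm hi])
      (by simp [ite_mul]) (by simp [ite_mul])]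
    haveI : Subsingleton (Fin (if k = k then 1 else 0)) := by rw [if_pos rfl]; infer_instance
    simp only [Matrix.reindex_apply, Matrix.submatrix_apply, Matrix.kroneckerMap_apply,
      Equiv.symm_symm, finCongr_apply]
    rw [show (finProdFinEquiv.symm (Fin.cast _ a)) =
      ((Fin.cast _ a).divNat, (Fin.cast _ a).modNat) from rfl]
    rw [show (finProdFinEquiv.symm (Fin.cast _ b)) =
      ((Fin.cast _ b).divNat, (Fin.cast _ b).modNat) from rfl]
    rw [Subsingleton.elim ((Fin.cast _ a).divNat) ((Fin.cast _ b).divNat), Matrix.one_apply_eq,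
      one_mul]
    congr 1 <;> apply Fin.ext <;>
      simp only [Fin.modNat, finCongr_symm_apply, Fin.coe_cast] <;>
      exact Nat.mod_eq_of_lt (lt_of_lt_of_le (Fin.isLt _) (le_of_eq (by simp [ite_mul])))
    all_goals simp [ite_mul]
  · intro k j
    simp only [hcomp]
    have hx : (fun i => if i = j then 1 else 0 : Fin m → ℕ) = Pi.single j 1 := by
      funext i; simp [Pi.single_apply]
    have h1 := hnormG k j
    have h2 := hnormG' k j
    rw [← hx] at h1 h2
    rw [h1, h2, inv_one, Matrix.one_mul, Matrix.mul_one]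
    ext a b
    rw [bdiag_single _ _ _ j (fun i hi => by simp [hi]) (fun i hi => by simp [hi])
      (by simp [mul_ite]) (by simp [mul_ite])]
    haveI : Subsingleton (Fin (if j = j then 1 else 0)) := by rw [if_pos rfl]; infer_instance
    simp only [Matrix.reindex_apply, Matrix.submatrix_apply, Matrix.kroneckerMap_apply,
      Equiv.symm_symm, finCongr_apply]
    rw [show (finProdFinEquiv.symm (Fin.cast _ a)) =
      ((Fin.cast _ a).divNat, (Fin.cast _ a).modNat) from rfl]
    rw [show (finProdFinEquiv.symm (Fin.cast _ b)) =
      ((Fin.cast _ b).divNat, (Fin.cast _ b).modNat) from rfl]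
    rw [Subsingleton.elim ((Fin.cast _ a).modNat) ((Fin.cast _ b).modNat), Matrix.one_apply_eq,
      mul_one]
    congr 1 <;> apply Fin.ext <;>
      simp only [Fin.divNat, finCongr_symm_apply, Fin.coe_cast] <;> simp
    all_goals simp [mul_ite]
end

section
/- In the simplified case n = m = p = 1 (so rank matrices are natural numbers and gauges are trivial at e₁), horizontal composition of 2-morphisms in 2SVect_cc reduces to the Kronecker product: for T an r' × r matrix and T̃ an r̃' × r̃ matrix (r, r', r̃, r̃' ≥ 1), (T̃ ∘ T) = s̃'(r') · (T̃ ⊗ T) · s̃(r)⁻¹, and this composition is strictly associative: given a third 2-morphism T̂ : (r̂, ŝ) ⟹ (r̂', ŝ') : 1 → 1, one has (T̂ ∘ T̃) ∘ T = T̂ ∘ (T̃ ∘ T), using the composition law for gauges (ŝ ∗ s̃)(a) = ŝ(r̃ a) · (Id_{r̂} ⊗ s̃(a)) · (ŝ(r̃)⁻¹ ⊗ Id_a). -/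
/-! Both sides are conjugates of the triple Kronecker product `T̂ ⊗ T̃ ⊗ T`. On the left, the
outer gauge factors `ŝ'(r̃') ⊗ Id` and `ŝ(r̃)⁻¹ ⊗ Id` of `(T̂ ∘ T̃) ⊗ T` cancel against the
correction terms `ŝ(r̃)⁻¹ ⊗ Id_a` built into the composite gauges, leaving conjugation by
`ŝ(r̃ a) · (Id ⊗ s̃(a))`; on the right, the same conjugation arises from
`T̂ ⊗ (s̃'(r') · (T̃ ⊗ T) · s̃(r)⁻¹)`. -/

open Matrix
open scoped Kronecker

/-- Horizontal composition of 2-morphisms in `2SVect_cc` in the case `n = m = p = 1`: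
`(T̃ ∘ T) = s̃'(r') · (T̃ ⊗ T) · s̃(r)⁻¹` (Kronecker product, written with the canonical
identification `Fin r̃' × Fin r' ≃ Fin (r̃'·r')`). -/
noncomputable def hcomp1 (r r' rt rt' : ℕ)
    (st : ∀ a : ℕ, Matrix (Fin (rt * a)) (Fin (rt * a)) ℂ)
    (st' : ∀ a : ℕ, Matrix (Fin (rt' * a)) (Fin (rt' * a)) ℂ)
    (Tt : Matrix (Fin rt') (Fin rt) ℂ) (T : Matrix (Fin r') (Fin r) ℂ) :
    Matrix (Fin (rt' * r')) (Fin (rt * r)) ℂ :=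
  st' r' * Matrix.reindex finProdFinEquiv finProdFinEquiv (Tt ⊗ₖ T) * (st r)⁻¹

/-- The composition law for gauges (case `n = m = p = 1`, where the permutation
matrices `P` are identities): `(ŝ ∗ s̃)(a) = ŝ(r̃a) · (Id_{r̂} ⊗ s̃(a)) · (ŝ(r̃)⁻¹ ⊗ Id_a)`. -/
noncomputable def gcomp (rh rt : ℕ)
    (sh : ∀ a : ℕ, Matrix (Fin (rh * a)) (Fin (rh * a)) ℂ)
    (st : ∀ a : ℕ, Matrix (Fin (rt * a)) (Fin (rt * a)) ℂ) :
    ∀ a : ℕ, Matrix (Fin (rh * rt * a)) (Fin (rh * rt * a)) ℂ := fun a =>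
  (Matrix.reindex (finCongr (mul_assoc rh rt a).symm) (finCongr (mul_assoc rh rt a).symm)
      (sh (rt * a) *
        Matrix.reindex finProdFinEquiv finProdFinEquiv
          ((1 : Matrix (Fin rh) (Fin rh) ℂ) ⊗ₖ st a))) *
    Matrix.reindex finProdFinEquiv finProdFinEquiv
      ((sh rt)⁻¹ ⊗ₖ (1 : Matrix (Fin a) (Fin a) ℂ))

local notation:100 A:100 " ⊗ᶠ " B:101 => Matrix.reindex finProdFinEquiv finProdFinEquiv (A ⊗ₖ B)

namespace Matrix

variable {α : Type*}

theorem reindex_mul_reindex [NonUnitalNonAssocSemiring α] {l m n l' m' n' : Type*}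
    [Fintype m] [Fintype m'] (e : l ≃ l') (f : m ≃ m') (g : n ≃ n')
    (M : Matrix l m α) (N : Matrix m n α) :
    reindex e f M * reindex f g N = reindex e g (M * N) := by
  simp only [reindex_apply, submatrix_mul_equiv]

end Matrix

theorem finProdFinEquiv_prodCongr_trans (a b c : ℕ) :
    (finProdFinEquiv.prodCongr (Equiv.refl (Fin c))).trans finProdFinEquiv =
      (Equiv.prodAssoc (Fin a) (Fin b) (Fin c)).trans
        (((Equiv.refl (Fin a)).prodCongr finProdFinEquiv).trans
          (finProdFinEquiv.trans (finCongr (mul_assoc a b c).symm))) := by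
  ext ⟨⟨i, j⟩, k⟩
  simp only [finProdFinEquiv, Equiv.trans_apply, Equiv.prodCongr_apply, Equiv.coe_fn_mk,
    Equiv.coe_refl, Prod.map_apply, id_eq, Equiv.prodAssoc_apply, finCongr_apply, Fin.cast_mk]
  ring

section KroneckerFin

variable {α : Type*} {a b c d e f : ℕ}

theorem kroneckerFin_assoc [Semigroup α] (A : Matrix (Fin a) (Fin d) α)
    (B : Matrix (Fin b) (Fin e) α) (C : Matrix (Fin c) (Fin f) α) :
    (A ⊗ᶠ B) ⊗ᶠ C =
      reindex (finCongr (mul_assoc a b c).symm) (finCongr (mul_assoc d e f).symm)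
        (A ⊗ᶠ (B ⊗ᶠ C)) := by
  rw [kroneckerMap_reindex_left, kroneckerMap_reindex_right, ← kronecker_assoc]
  simp only [← Equiv.trans_apply, reindex_trans, finProdFinEquiv_prodCongr_trans,
    Equiv.trans_assoc]

theorem kroneckerFin_mul [CommSemiring α] (A : Matrix (Fin a) (Fin b) α)
    (B : Matrix (Fin b) (Fin c) α) (C : Matrix (Fin d) (Fin e) α) (D : Matrix (Fin e) (Fin f) α) :
    (A * B) ⊗ᶠ (C * D) = (A ⊗ᶠ C) * (B ⊗ᶠ D) := by
  rw [mul_kronecker_mul, reindex_mul_reindex]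

theorem kroneckerFin_mul_mul_left [CommSemiring α] (A : Matrix (Fin a) (Fin a) α)
    (X : Matrix (Fin a) (Fin b) α) (B : Matrix (Fin b) (Fin b) α)
    (C : Matrix (Fin c) (Fin d) α) :
    (A * X * B) ⊗ᶠ C = (A ⊗ᶠ (1 : Matrix (Fin c) (Fin c) α)) * (X ⊗ᶠ C) *
      (B ⊗ᶠ (1 : Matrix (Fin d) (Fin d) α)) := by
  rw [← kroneckerFin_mul, ← kroneckerFin_mul, Matrix.one_mul, Matrix.mul_one]

theorem kroneckerFin_mul_mul_right [CommSemiring α] (C : Matrix (Fin c) (Fin d) α)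
    (A : Matrix (Fin a) (Fin a) α) (X : Matrix (Fin a) (Fin b) α) (B : Matrix (Fin b) (Fin b) α) :
    C ⊗ᶠ (A * X * B) = ((1 : Matrix (Fin c) (Fin c) α) ⊗ᶠ A) * (C ⊗ᶠ X) *
      ((1 : Matrix (Fin d) (Fin d) α) ⊗ᶠ B) := by
  rw [← kroneckerFin_mul, ← kroneckerFin_mul, Matrix.one_mul, Matrix.mul_one]

theorem kroneckerFin_one [CommSemiring α] :
    (1 : Matrix (Fin a) (Fin a) α) ⊗ᶠ (1 : Matrix (Fin b) (Fin b) α) = 1 := by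
  rw [one_kronecker_one, reindex_apply, submatrix_one_equiv]

theorem kroneckerFin_inv [CommRing α] (A : Matrix (Fin a) (Fin a) α)
    (B : Matrix (Fin b) (Fin b) α) : A⁻¹ ⊗ᶠ B⁻¹ = (A ⊗ᶠ B)⁻¹ := by
  rw [inv_reindex, inv_kronecker]

end KroneckerFin

section Gauge

variable {rh rt rh' rt' r r' : ℕ}
    {sh : ∀ a : ℕ, Matrix (Fin (rh * a)) (Fin (rh * a)) ℂ}
    {st : ∀ a : ℕ, Matrix (Fin (rt * a)) (Fin (rt * a)) ℂ}

theorem gcomp_mul_kroneckerFin (hsh : IsUnit (sh rt)) (a : ℕ) :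
    gcomp rh rt sh st a * (sh rt ⊗ᶠ (1 : Matrix (Fin a) (Fin a) ℂ)) =
      reindex (finCongr (mul_assoc rh rt a).symm) (finCongr (mul_assoc rh rt a).symm)
        (sh (rt * a) * ((1 : Matrix (Fin rh) (Fin rh) ℂ) ⊗ᶠ st a)) := by
  have hdet : IsUnit (sh rt).det := (isUnit_iff_isUnit_det _).1 hsh
  rw [gcomp, Matrix.mul_assoc, ← kroneckerFin_mul, nonsing_inv_mul _ hdet, Matrix.one_mul,
    kroneckerFin_one, Matrix.mul_one]

variable {sh' : ∀ a : ℕ, Matrix (Fin (rh' * a)) (Fin (rh' * a)) ℂ}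
    {st' : ∀ a : ℕ, Matrix (Fin (rt' * a)) (Fin (rt' * a)) ℂ}
    (Th : Matrix (Fin rh') (Fin rh) ℂ) (Tt : Matrix (Fin rt') (Fin rt) ℂ)
    (T : Matrix (Fin r') (Fin r) ℂ)

theorem hcomp1_hcomp1 :
    hcomp1 (rt * r) (rt' * r') rh rh' sh sh' Th (hcomp1 r r' rt rt' st st' Tt T) =
      (sh' (rt' * r') * ((1 : Matrix (Fin rh') (Fin rh') ℂ) ⊗ᶠ st' r')) * (Th ⊗ᶠ (Tt ⊗ᶠ T)) *
        (sh (rt * r) * ((1 : Matrix (Fin rh) (Fin rh) ℂ) ⊗ᶠ st r))⁻¹ := by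
  rw [hcomp1, hcomp1, kroneckerFin_mul_mul_right, Matrix.mul_inv_rev, ← kroneckerFin_inv, inv_one]
  simp only [Matrix.mul_assoc]

theorem hcomp1_gcomp (hsh : IsUnit (sh rt)) (hsh' : IsUnit (sh' rt')) :
    hcomp1 r r' (rh * rt) (rh' * rt') (gcomp rh rt sh st) (gcomp rh' rt' sh' st')
        (hcomp1 rt rt' rh rh' sh sh' Th Tt) T =
      reindex (finCongr (mul_assoc rh' rt' r').symm) (finCongr (mul_assoc rh' rt' r').symm)
          (sh' (rt' * r') * ((1 : Matrix (Fin rh') (Fin rh') ℂ) ⊗ᶠ st' r')) *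
        ((Th ⊗ᶠ Tt) ⊗ᶠ T) *
        (reindex (finCongr (mul_assoc rh rt r).symm) (finCongr (mul_assoc rh rt r).symm)
          (sh (rt * r) * ((1 : Matrix (Fin rh) (Fin rh) ℂ) ⊗ᶠ st r)))⁻¹ := by
  have hinv : (sh rt)⁻¹ ⊗ᶠ (1 : Matrix (Fin r) (Fin r) ℂ) = (sh rt ⊗ᶠ 1)⁻¹ := by
    rw [← kroneckerFin_inv, inv_one]
  rw [hcomp1, hcomp1, kroneckerFin_mul_mul_left, hinv, ← gcomp_mul_kroneckerFin hsh,
    ← gcomp_mul_kroneckerFin hsh']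
  simp only [Matrix.mul_inv_rev, Matrix.mul_assoc]

end Gauge

theorem stmt17_general (r r' rt rt' rh rh' : ℕ)
    (hrt : 1 ≤ rt) (hrt' : 1 ≤ rt')
    (st : ∀ a : ℕ, Matrix (Fin (rt * a)) (Fin (rt * a)) ℂ)
    (st' : ∀ a : ℕ, Matrix (Fin (rt' * a)) (Fin (rt' * a)) ℂ)
    (sh : ∀ a : ℕ, Matrix (Fin (rh * a)) (Fin (rh * a)) ℂ)
    (sh' : ∀ a : ℕ, Matrix (Fin (rh' * a)) (Fin (rh' * a)) ℂ)
    (hsh : ∀ a, 1 ≤ a → IsUnit (sh a)) (hsh' : ∀ a, 1 ≤ a → IsUnit (sh' a))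
    (T : Matrix (Fin r') (Fin r) ℂ) (Tt : Matrix (Fin rt') (Fin rt) ℂ)
    (Th : Matrix (Fin rh') (Fin rh) ℂ) :
    (hcomp1 r r' rt rt' st st' Tt T =
      st' r' * Matrix.reindex finProdFinEquiv finProdFinEquiv (Tt ⊗ₖ T) * (st r)⁻¹) ∧
    (hcomp1 r r' (rh * rt) (rh' * rt') (gcomp rh rt sh st) (gcomp rh' rt' sh' st')
        (hcomp1 rt rt' rh rh' sh sh' Th Tt) T =
      Matrix.reindex (finCongr (mul_assoc rh' rt' r').symm)
        (finCongr (mul_assoc rh rt r).symm)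
        (hcomp1 (rt * r) (rt' * r') rh rh' sh sh' Th
          (hcomp1 r r' rt rt' st st' Tt T))) := by
  refine ⟨rfl, ?_⟩
  rw [hcomp1_gcomp Th Tt T (hsh rt hrt) (hsh' rt' hrt'), hcomp1_hcomp1, kroneckerFin_assoc,
    inv_reindex, reindex_mul_reindex, reindex_mul_reindex]

/-- in the case `n = m = p = 1`, horizontal composition in `2SVect_cc`
reduces to a gauge-conjugated Kronecker product, and it is strictly associative:
`(T̂ ∘ T̃) ∘ T = T̂ ∘ (T̃ ∘ T)` (up to the canonical identification
`r̂'·(r̃'·r') = (r̂'·r̃')·r'`), using the gauge composition law `gcomp`. -/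
theorem stmt17 (r r' rt rt' rh rh' : ℕ)
    (hr : 1 ≤ r) (hr' : 1 ≤ r') (hrt : 1 ≤ rt) (hrt' : 1 ≤ rt') (hrh : 1 ≤ rh)
    (hrh' : 1 ≤ rh')
    (s : ∀ a : ℕ, Matrix (Fin (r * a)) (Fin (r * a)) ℂ)
    (s' : ∀ a : ℕ, Matrix (Fin (r' * a)) (Fin (r' * a)) ℂ)
    (st : ∀ a : ℕ, Matrix (Fin (rt * a)) (Fin (rt * a)) ℂ)
    (st' : ∀ a : ℕ, Matrix (Fin (rt' * a)) (Fin (rt' * a)) ℂ)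
    (sh : ∀ a : ℕ, Matrix (Fin (rh * a)) (Fin (rh * a)) ℂ)
    (sh' : ∀ a : ℕ, Matrix (Fin (rh' * a)) (Fin (rh' * a)) ℂ)
    (hs : ∀ a, 1 ≤ a → IsUnit (s a)) (hs' : ∀ a, 1 ≤ a → IsUnit (s' a))
    (hst : ∀ a, 1 ≤ a → IsUnit (st a)) (hst' : ∀ a, 1 ≤ a → IsUnit (st' a))
    (hsh : ∀ a, 1 ≤ a → IsUnit (sh a)) (hsh' : ∀ a, 1 ≤ a → IsUnit (sh' a))
    (hns : s 1 = 1) (hns' : s' 1 = 1) (hnst : st 1 = 1) (hnst' : st' 1 = 1)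
    (hnsh : sh 1 = 1) (hnsh' : sh' 1 = 1)
    (T : Matrix (Fin r') (Fin r) ℂ) (Tt : Matrix (Fin rt') (Fin rt) ℂ)
    (Th : Matrix (Fin rh') (Fin rh) ℂ) :
    (hcomp1 r r' rt rt' st st' Tt T =
      st' r' * Matrix.reindex finProdFinEquiv finProdFinEquiv (Tt ⊗ₖ T) * (st r)⁻¹) ∧
    (hcomp1 r r' (rh * rt) (rh' * rt') (gcomp rh rt sh st) (gcomp rh' rt' sh' st')
        (hcomp1 rt rt' rh rh' sh sh' Th Tt) T =
      Matrix.reindex (finCongr (mul_assoc rh' rt' r').symm)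
        (finCongr (mul_assoc rh rt r).symm)
        (hcomp1 (rt * r) (rt' * r') rh rh' sh sh' Th
          (hcomp1 r r' rt rt' st st' Tt T))) :=
  stmt17_general r r' rt rt' rh rh' hrt hrt' st st' sh sh' hsh hsh' T Tt Th
end
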